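/- arXiv:1802.06127 — 4 statements merged into one kernel-verified Lean document; each statement's English description precedes it below -/
import Mathlib

section
/- Let 0 < q < 1, n ∈ ℕ with n ≥ 1, and y ∈ (q,1]. Then the doubly infinite series ∑_{k∈ℤ} [ q^{−n(n−1)}(q^k y)^{2n} / (1 + q^{−n(n−1)}(q^k y)^{2n}) + 1 / (1 + q^{n(n+1)}(q^k y)^{2n}) − 1 ] converges absolutely and its sum equals n. -/
/-!
Put `c = q^{-n(n-1)} y^{2n}` and `r = q^{2n} < 1`. Since `q^{n(n+1)} = q^{-n(n-1)} r^n`, the `k`-th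
summand equals `g (k + n) - g k` for the increasing function `g k = (1 + c r^k)⁻¹`, which tends
to `0` at `-∞` and to `1` at `+∞`. Hence the series of `g (k + 1) - g k` telescopes to `1`, and
the one of `g (k + n) - g k`, a sum of `n` shifted copies of it, to `n`.
-/

open Filter Topology

lemma hasSum_nat_sub_of_monotone {f : ℕ → ℝ} {b : ℝ} (hf : Monotone f)
    (hb : Tendsto f atTop (𝓝 b)) : HasSum (fun n => f (n + 1) - f n) (b - f 0) := by
  refine (hasSum_iff_tendsto_nat_of_nonneg (fun n => sub_nonneg.2 (hf n.le_succ)) _).2 ?_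
  simpa only [Finset.sum_range_sub] using hb.sub_const (f 0)

lemma hasSum_int_sub_of_monotone {f : ℤ → ℝ} {a b : ℝ} (hf : Monotone f)
    (ha : Tendsto (fun n : ℕ => f (-n)) atTop (𝓝 a))
    (hb : Tendsto (fun n : ℕ => f n) atTop (𝓝 b)) :
    HasSum (fun k => f (k + 1) - f k) (b - a) := by
  have hpos : HasSum (fun n : ℕ => f (n + 1) - f n) (b - f 0) :=
    hasSum_nat_sub_of_monotone (hf.comp Nat.mono_cast) hb
  have hneg : HasSum (fun n : ℕ => f (-(n + 1 : ℤ) + 1) - f (-(n + 1 : ℤ))) (f 0 - a) := by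
    convert hasSum_nat_sub_of_monotone (f := fun n => -f (-n))
      (fun m n hmn => neg_le_neg (hf (by omega))) ha.neg using 1
    · ext n
      push_cast
      ring_nf
    · simp only [Int.natCast_zero, neg_zero, sub_neg_eq_add]
      ring
  convert hpos.of_nat_of_neg_add_one (f := fun k => f (k + 1) - f k) hneg using 1
  ring

lemma hasSum_int_sub_add_nat {α : Type*} [AddCommGroup α] [TopologicalSpace α] [ContinuousAdd α]
    {f : ℤ → α} {s : α} (h : HasSum (fun k => f (k + 1) - f k) s) (n : ℕ) :
    HasSum (fun k => f (k + n) - f k) (n • s) := by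
  have hshift (j : ℕ) : HasSum (fun k => f (k + j + 1) - f (k + j)) s :=
    (Equiv.addRight (j : ℤ)).hasSum_iff.2 h
  convert hasSum_sum (s := Finset.range n) fun j _ => hshift j using 1
  · ext k
    have := Finset.sum_range_sub (fun j : ℕ => f (k + j)) n
    push_cast [← add_assoc] at this
    simpa using this.symm
  · simp

lemma monotone_inv_one_add_mul_zpow {c r : ℝ} (hc : 0 ≤ c) (hr0 : 0 < r) (hr1 : r ≤ 1) :
    Monotone fun k : ℤ => (1 + c * r ^ k)⁻¹ := by
  intro m n hmn
  have hpow := zpow_right_anti₀ hr0 hr1 hmn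
  dsimp only
  gcongr

lemma hasSum_inv_one_add_mul_zpow_add_sub {c r : ℝ} (hc : 0 < c) (hr0 : 0 < r) (hr1 : r < 1)
    (n : ℕ) : HasSum (fun k : ℤ => (1 + c * r ^ (k + n))⁻¹ - (1 + c * r ^ k)⁻¹) n := by
  have hbot : Tendsto (fun n : ℕ => (1 + c * r ^ (-n : ℤ))⁻¹) atTop (𝓝 0) := by
    simp only [zpow_neg, zpow_natCast, ← inv_pow]
    exact tendsto_inv_atTop_zero.comp <| tendsto_atTop_add_const_left _ 1 <|
      (tendsto_pow_atTop_atTop_of_one_lt ((one_lt_inv₀ hr0).2 hr1)).const_mul_atTop hc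
  have htop : Tendsto (fun n : ℕ => (1 + c * r ^ (n : ℤ))⁻¹) atTop (𝓝 1) := by
    simpa only [zpow_natCast, mul_zero, add_zero, inv_one] using
      (((tendsto_pow_atTop_nhds_zero_of_lt_one hr0.le hr1).const_mul c).const_add 1).inv₀
        (by norm_num)
  simpa using hasSum_int_sub_add_nat
    (hasSum_int_sub_of_monotone (monotone_inv_one_add_mul_zpow hc.le hr0 hr1.le) hbot htop) n

theorem stmt_3 (q y : ℝ) (hq0 : 0 < q) (hq1 : q < 1) (n : ℕ) (hn : 1 ≤ n)
    (hy : y ∈ Set.Ioc q 1) :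
    Summable (fun k : ℤ =>
      |q ^ (-((n : ℤ) * ((n : ℤ) - 1))) * (q ^ k * y) ^ (2 * n) /
          (1 + q ^ (-((n : ℤ) * ((n : ℤ) - 1))) * (q ^ k * y) ^ (2 * n)) +
        1 / (1 + q ^ ((n : ℤ) * ((n : ℤ) + 1)) * (q ^ k * y) ^ (2 * n)) - 1|) ∧
    HasSum (fun k : ℤ =>
      q ^ (-((n : ℤ) * ((n : ℤ) - 1))) * (q ^ k * y) ^ (2 * n) /
          (1 + q ^ (-((n : ℤ) * ((n : ℤ) - 1))) * (q ^ k * y) ^ (2 * n)) +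
        1 / (1 + q ^ ((n : ℤ) * ((n : ℤ) + 1)) * (q ^ k * y) ^ (2 * n)) - 1)
      (n : ℝ) := by
  refine (fun h => ⟨h.summable.abs, h⟩) ?_
  have hy0 : 0 < y := hq0.trans hy.1
  have hpow (k : ℤ) : (q ^ k * y) ^ (2 * n) = (q ^ (2 * n)) ^ k * y ^ (2 * n) := by
    rw [mul_pow, ← zpow_natCast (q ^ k), ← zpow_mul, mul_comm k, zpow_mul, zpow_natCast]
  have hshift : q ^ ((n : ℤ) * ((n : ℤ) + 1)) =
      q ^ (-((n : ℤ) * ((n : ℤ) - 1))) * (q ^ (2 * n)) ^ n := by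
    rw [← pow_mul, ← zpow_natCast q, ← zpow_add₀ hq0.ne']
    congr 1
    push_cast
    ring
  convert hasSum_inv_one_add_mul_zpow_add_sub
    (c := q ^ (-((n : ℤ) * ((n : ℤ) - 1))) * y ^ (2 * n)) (r := q ^ (2 * n))
    (by positivity) (by positivity) (pow_lt_one₀ hq0.le hq1 (by omega)) n using 2 with k
  have hden : 0 < 1 + q ^ (-((n : ℤ) * ((n : ℤ) - 1))) * (q ^ k * y) ^ (2 * n) := by positivity
  rw [hshift, hpow, zpow_add₀ (pow_pos hq0 _).ne', zpow_natCast]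
  field_simp
  ring
end

section
/- Let 0 < q < 1, n ∈ ℕ with n ≥ 1, and y ∈ (q,1]. Then ∑_{k∈ℤ} [ q^{n(n+1)}(q^k y)^{2n} / (1 + q^{n(n+1)}(q^k y)^{2n}) + 1 / (1 + q^{−n(n−1)}(q^k y)^{2n}) − 1 ] converges absolutely with sum equal to −n. -/
/-! With `b = q ^ (-n(n-1))` and `h k = 1 / (1 + b (q^k y)^(2n))`, the identity
`q^(n(n+1)) (q^k y)^(2n) = b (q^(k+n) y)^(2n)` turns the `k`-th term into `h k - h (k + n)`.
As `h` increases from `0` at `-∞` to `1` at `+∞`, this telescopes to `-n`, and since all terms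
have the same sign the convergence is absolute. -/

open Finset Filter Topology

theorem zpow_mul_zpow_mul_pow_eq_shift {K : Type*} [Field K] {q : K} (hq : q ≠ 0) (y : K)
    (n : ℕ) (k : ℤ) :
    q ^ ((n : ℤ) * ((n : ℤ) + 1)) * (q ^ k * y) ^ (2 * n) =
      q ^ (-((n : ℤ) * ((n : ℤ) - 1))) * (q ^ (k + n) * y) ^ (2 * n) := by
  rw [mul_pow, mul_pow, ← mul_assoc, ← mul_assoc, ← zpow_natCast (q ^ k),
    ← zpow_natCast (q ^ (k + n)), ← zpow_mul, ← zpow_mul, ← zpow_add₀ hq, ← zpow_add₀ hq]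
  congr 2
  push_cast
  ring

theorem Monotone.hasSum_int_add_one_sub {f : ℤ → ℝ} (hf : Monotone f) {a b : ℝ}
    (ha : Tendsto (fun n : ℕ => f (-n)) atTop (𝓝 a))
    (hb : Tendsto (fun n : ℕ => f n) atTop (𝓝 b)) :
    HasSum (fun k => f (k + 1) - f k) (b - a) := by
  have hnonneg : ∀ k, 0 ≤ f (k + 1) - f k := fun k => sub_nonneg.2 (hf (by omega))
  have hpos : HasSum (fun n : ℕ => f ((n : ℤ) + 1) - f n) (b - f 0) := by
    rw [hasSum_iff_tendsto_nat_of_nonneg (fun n => hnonneg n)]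
    have hpartial (N : ℕ) : ∑ i ∈ range N, (f ((i : ℤ) + 1) - f i) = f N - f 0 := by
      simpa using Finset.sum_range_sub (fun i : ℕ => f i) N
    simp only [hpartial]
    exact hb.sub_const (f 0)
  have hneg : HasSum (fun n : ℕ => f (-((n : ℤ) + 1) + 1) - f (-((n : ℤ) + 1))) (f 0 - a) := by
    rw [hasSum_iff_tendsto_nat_of_nonneg (fun n => hnonneg _)]
    have hpartial (N : ℕ) :
        ∑ i ∈ range N, (f (-((i : ℤ) + 1) + 1) - f (-((i : ℤ) + 1))) = f 0 - f (-N) := by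
      simpa using Finset.sum_range_sub' (fun i : ℕ => f (-i)) N
    simp only [hpartial]
    exact ha.const_sub (f 0)
  convert HasSum.of_nat_of_neg_add_one (f := fun k => f (k + 1) - f k) hpos hneg using 1
  ring

theorem Monotone.hasSum_int_add_sub {f : ℤ → ℝ} (hf : Monotone f) {a b : ℝ}
    (ha : Tendsto (fun n : ℕ => f (-n)) atTop (𝓝 a))
    (hb : Tendsto (fun n : ℕ => f n) atTop (𝓝 b)) (m : ℕ) :
    HasSum (fun k => f (k + m) - f k) (m * (b - a)) := by
  induction m with
  | zero => simp
  | succ m ih =>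
    have hshift : HasSum (fun k => f (k + m + 1) - f (k + m)) (b - a) :=
      (Equiv.addRight (m : ℤ)).hasSum_iff.2 (hf.hasSum_int_add_one_sub ha hb)
    convert hshift.add ih using 1
    · ext k
      push_cast
      rw [← add_assoc]
      ring
    · push_cast
      ring

theorem monotone_one_div_one_add_mul_zpow_pow {q c y : ℝ} (hq0 : 0 < q) (hq1 : q ≤ 1)
    (hc : 0 ≤ c) (hy : 0 ≤ y) (m : ℕ) :
    Monotone (fun k : ℤ => 1 / (1 + c * (q ^ k * y) ^ m)) := by
  intro j k hjk
  dsimp only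
  gcongr 1 / (1 + c * (?_ * y) ^ m)
  exact zpow_le_zpow_right_of_le_one₀ hq0 hq1 hjk

theorem tendsto_one_div_one_add_mul_zpow_pow_atTop {q c y : ℝ} (hq0 : 0 ≤ q) (hq1 : q < 1)
    {m : ℕ} (hm : m ≠ 0) :
    Tendsto (fun n : ℕ => 1 / (1 + c * (q ^ (n : ℤ) * y) ^ m)) atTop (𝓝 1) := by
  have hpow : Tendsto (fun n : ℕ => c * (q ^ n * y) ^ m) atTop (𝓝 0) := by
    simpa [hm] using
      (((tendsto_pow_atTop_nhds_zero_of_lt_one hq0 hq1).mul_const y).pow m).const_mul c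
  simpa using (hpow.const_add 1).inv₀ (by norm_num)

theorem tendsto_one_div_one_add_mul_zpow_neg_pow_atTop {q c y : ℝ} (hq0 : 0 < q) (hq1 : q < 1)
    (hc : 0 < c) (hy : 0 < y) {m : ℕ} (hm : m ≠ 0) :
    Tendsto (fun n : ℕ => 1 / (1 + c * (q ^ (-(n : ℤ)) * y) ^ m)) atTop (𝓝 0) := by
  have hbase : Tendsto (fun n : ℕ => q⁻¹ ^ n * y) atTop atTop :=
    (tendsto_pow_atTop_atTop_of_one_lt ((one_lt_inv₀ hq0).2 hq1)).atTop_mul_const hy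
  have hden : Tendsto (fun n : ℕ => 1 + c * (q⁻¹ ^ n * y) ^ m) atTop atTop :=
    tendsto_atTop_add_const_left _ _ (((tendsto_pow_atTop hm).comp hbase).const_mul_atTop hc)
  refine hden.inv_tendsto_atTop.congr fun n => ?_
  simp [zpow_neg, inv_pow]

theorem stmt_4 (q y : ℝ) (hq0 : 0 < q) (hq1 : q < 1) (n : ℕ) (hn : 1 ≤ n)
    (hy : y ∈ Set.Ioc q 1) :
    Summable (fun k : ℤ =>
      |q ^ ((n : ℤ) * ((n : ℤ) + 1)) * (q ^ k * y) ^ (2 * n) /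
          (1 + q ^ ((n : ℤ) * ((n : ℤ) + 1)) * (q ^ k * y) ^ (2 * n)) +
        1 / (1 + q ^ (-((n : ℤ) * ((n : ℤ) - 1))) * (q ^ k * y) ^ (2 * n)) - 1|) ∧
    HasSum (fun k : ℤ =>
      q ^ ((n : ℤ) * ((n : ℤ) + 1)) * (q ^ k * y) ^ (2 * n) /
          (1 + q ^ ((n : ℤ) * ((n : ℤ) + 1)) * (q ^ k * y) ^ (2 * n)) +
        1 / (1 + q ^ (-((n : ℤ) * ((n : ℤ) - 1))) * (q ^ k * y) ^ (2 * n)) - 1)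
      (-(n : ℝ)) := by
  have hy0 : 0 < y := hq0.trans hy.1
  have hm : 2 * n ≠ 0 := by omega
  have hc : 0 < q ^ (-((n : ℤ) * ((n : ℤ) - 1))) := zpow_pos hq0 _
  set h : ℤ → ℝ := fun k => 1 / (1 + q ^ (-((n : ℤ) * ((n : ℤ) - 1))) * (q ^ k * y) ^ (2 * n))
  have hmono : Monotone h := monotone_one_div_one_add_mul_zpow_pow hq0 hq1.le hc.le hy0.le _
  have hsum : HasSum (fun k => h (k + n) - h k) (n * (1 - 0)) :=
    hmono.hasSum_int_add_sub
      (tendsto_one_div_one_add_mul_zpow_neg_pow_atTop hq0 hq1 hc hy0 hm)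
      (tendsto_one_div_one_add_mul_zpow_pow_atTop hq0.le hq1 hm) n
  have hterm (k : ℤ) :
      q ^ ((n : ℤ) * ((n : ℤ) + 1)) * (q ^ k * y) ^ (2 * n) /
          (1 + q ^ ((n : ℤ) * ((n : ℤ) + 1)) * (q ^ k * y) ^ (2 * n)) +
        1 / (1 + q ^ (-((n : ℤ) * ((n : ℤ) - 1))) * (q ^ k * y) ^ (2 * n)) - 1 =
      -(h (k + n) - h k) := by
    have hpos : 0 < q ^ (-((n : ℤ) * ((n : ℤ) - 1))) * (q ^ (k + n) * y) ^ (2 * n) := by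
      positivity
    simp only [h]
    rw [zpow_mul_zpow_mul_pow_eq_shift hq0.ne']
    field_simp
    ring
  have hle (k : ℤ) : h k ≤ h (k + n) := hmono (by omega)
  simp only [hterm, abs_neg, fun k => abs_of_nonneg (sub_nonneg.2 (hle k))]
  exact ⟨hsum.summable, by simpa using hsum.neg⟩
end

section
/- Let 0 < q < 1, y ∈ (q,1], n ≥ 1, and let h, f_n : [0,∞) → ℝ be the Powers–Rieffel data: h(t) = √(φ(t)(1−φ(t))) on [q,1] and 0 elsewhere; f_n(t) = φ(t) on [q,1], 1 on (1,q^{−n+1}), 1−φ(q^n t) on [q^{−n+1},q^{−n}], 0 elsewhere, where φ : [q,1] → [0,1] is continuous with φ(q)=0, φ(1)=1. Define the operator R on ℓ²(ℤ) by R e_k = h(q^k y) e_{k−n} + f_n(q^k y) e_k + h(q^{k+n} y) e_{k+n}. Then R is a self-adjoint projection (R = R* = R²). -/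
/-!
Put `t_k = q ^ k * y`, so that `q ^ (k + 1) < t_k ≤ q ^ k`. Then `h t_k` vanishes unless `k = 0`,
while `f_n t_k` is `φ y` at `k = 0`, `1 - φ y` at `k = -n`, `1` for `-n < k < 0` and `0` otherwise;
the endpoints `t_k = q` and `t_k = q ^ (-n + 1)` cause no trouble because `φ q = 0`. So `R` is the
identity on `e_k` for `-n < k < 0`, vanishes on `e_k` for `k ∉ [-n, 0]`, and acts on
`span {e_{-n}, e_0}` by the real symmetric matrix `!![1 - φ y, s; s, φ y]` with
`s = √(φ y * (1 - φ y))`, which is idempotent because `s ^ 2 = φ y * (1 - φ y)`.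
-/

open Set
open scoped lp

namespace lp

variable {ι 𝕜 : Type*} [RCLike 𝕜] [DecidableEq ι]

theorem ext_single_one {F : Type*} [AddCommMonoid F] [Module 𝕜 F] [TopologicalSpace F] [T2Space F]
    {p : ENNReal} [Fact (1 ≤ p)] (hp : p ≠ ⊤) {S T : lp (fun _ : ι => 𝕜) p →L[𝕜] F}
    (h : ∀ i, S (lp.single p i 1) = T (lp.single p i 1)) : S = T :=
  lp.ext_continuousLinearMap hp fun i => ContinuousLinearMap.ext_ring (h i)

theorem isSelfAdjoint_of_single_apply {R : ℓ²(ι, 𝕜) →L[𝕜] ℓ²(ι, 𝕜)}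
    (hR : ∀ i j, R (lp.single 2 i 1) j = starRingEnd 𝕜 (R (lp.single 2 j 1) i)) :
    IsSelfAdjoint R := by
  rw [ContinuousLinearMap.isSelfAdjoint_iff']
  refine ext_single_one ENNReal.ofNat_ne_top fun i => lp.ext <| funext fun j => ?_
  have hcoord (x : ℓ²(ι, 𝕜)) : x j = inner 𝕜 (lp.single 2 j 1) x := by
    simp [lp.inner_single_left]
  rw [hcoord, hcoord, ContinuousLinearMap.adjoint_inner_right, lp.inner_single_left,
    lp.inner_single_right, hR]
  simp

end lp

theorem isSelfAdjoint_of_apply_single_eq (n : ℤ) (a b : ℤ → ℝ)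
    (R : ℓ²(ℤ, ℂ) →L[ℂ] ℓ²(ℤ, ℂ))
    (hR : ∀ k, R (lp.single 2 k 1) = (a k : ℂ) • lp.single 2 (k - n) 1 +
      (b k : ℂ) • lp.single 2 k 1 + (a (k + n) : ℂ) • lp.single 2 (k + n) 1) :
    IsSelfAdjoint R := by
  refine lp.isSelfAdjoint_of_single_apply fun i j => ?_
  simp only [hR, lp.coeFn_add, lp.coeFn_smul, Pi.add_apply, Pi.smul_apply, lp.single_apply,
    Pi.single_apply, smul_eq_mul, mul_ite, mul_one, mul_zero, map_add]
  simp only [apply_ite (starRingEnd ℂ), Complex.conj_ofReal, map_zero]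
  have hshift (i j : ℤ) :
      (if j = i - n then (a i : ℂ) else 0) = if i = j + n then (a (j + n) : ℂ) else 0 := by
    by_cases hij : i = j + n
    · subst hij; simp
    · rw [if_neg hij, if_neg (by omega)]
  have hdiag : (if j = i then (b i : ℂ) else 0) = if i = j then (b j : ℂ) else 0 := by
    by_cases hij : i = j
    · subst hij; rfl
    · rw [if_neg (Ne.symm hij), if_neg hij]
  rw [hshift i j, ← hshift j i, hdiag]
  ring

namespace PowersRieffel

noncomputable def h (q : ℝ) (φ : ℝ → ℝ) (t : ℝ) : ℝ :=
  if t ∈ Icc q 1 then Real.sqrt (φ t * (1 - φ t)) else 0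

noncomputable def f (q : ℝ) (n : ℕ) (φ : ℝ → ℝ) (t : ℝ) : ℝ :=
  if t ∈ Icc q 1 then φ t
  else if t ∈ Ioo 1 (q ^ (-(n : ℤ) + 1)) then 1
  else if t ∈ Icc (q ^ (-(n : ℤ) + 1)) (q ^ (-(n : ℤ))) then 1 - φ (q ^ n * t)
  else 0

def diag (Φ : ℝ) (n k : ℤ) : ℝ :=
  if k = 0 then Φ else if k = -n then 1 - Φ else if -n < k ∧ k < 0 then 1 else 0

variable {q : ℝ} {n : ℕ} {φ : ℝ → ℝ} {t : ℝ}

theorem h_of_le (hφq : φ q = 0) (ht : t ≤ q) : h q φ t = 0 := by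
  rw [h]
  split_ifs with hmem
  · rw [le_antisymm ht hmem.1, hφq]; simp
  · rfl

theorem h_of_one_lt (ht : 1 < t) : h q φ t = 0 :=
  if_neg fun hmem => ht.not_ge hmem.2

theorem one_le_zpow_neg_add_one (hq0 : 0 < q) (hq1 : q < 1) (hn : 1 ≤ n) :
    1 ≤ q ^ (-(n : ℤ) + 1) :=
  one_le_zpow_of_nonpos₀ hq0 hq1.le (by omega)

theorem zpow_neg_add_one_le (hq0 : 0 < q) (hq1 : q < 1) :
    q ^ (-(n : ℤ) + 1) ≤ q ^ (-(n : ℤ)) :=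
  zpow_le_zpow_right_of_le_one₀ hq0 hq1.le (by omega)

theorem f_of_le (hq0 : 0 < q) (hq1 : q < 1) (hn : 1 ≤ n) (hφq : φ q = 0) (ht : t ≤ q) :
    f q n φ t = 0 := by
  have := one_le_zpow_neg_add_one hq0 hq1 hn
  rw [f]
  split_ifs with hIcc hIoo hIcc'
  · rw [le_antisymm ht hIcc.1, hφq]
  · linarith [hIoo.1]
  · linarith [hIcc'.1]
  · rfl

theorem f_of_mem_Ioc (ht : t ∈ Ioc q 1) : f q n φ t = φ t :=
  if_pos (Ioc_subset_Icc_self ht)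

theorem f_of_one_lt_of_le (hq0 : 0 < q) (hq1 : q < 1) (hφq : φ q = 0) (ht1 : 1 < t)
    (ht : t ≤ q ^ (-(n : ℤ) + 1)) : f q n φ t = 1 := by
  rw [f, if_neg fun hmem => ht1.not_ge hmem.2]
  rcases ht.lt_or_eq with ht | rfl
  · exact if_pos ⟨ht1, ht⟩
  · rw [if_neg fun hmem => hmem.2.ne rfl, if_pos ⟨le_rfl, zpow_neg_add_one_le hq0 hq1⟩,
      ← zpow_natCast, ← zpow_add₀ hq0.ne', add_neg_cancel_left, zpow_one, hφq, sub_zero]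

theorem f_of_lt_of_le (hq0 : 0 < q) (hq1 : q < 1) (hn : 1 ≤ n) (ht1 : q ^ (-(n : ℤ) + 1) < t)
    (ht : t ≤ q ^ (-(n : ℤ))) : f q n φ t = 1 - φ (q ^ n * t) := by
  have := one_le_zpow_neg_add_one hq0 hq1 hn
  rw [f, if_neg fun hmem => by linarith [hmem.2], if_neg fun hmem => by linarith [hmem.2],
    if_pos ⟨ht1.le, ht⟩]

theorem f_of_lt (hq0 : 0 < q) (hq1 : q < 1) (hn : 1 ≤ n) (ht : q ^ (-(n : ℤ)) < t) :
    f q n φ t = 0 := by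
  have := one_le_zpow_neg_add_one hq0 hq1 hn
  have := zpow_neg_add_one_le (n := n) hq0 hq1
  rw [f, if_neg fun hmem => by linarith [hmem.2], if_neg fun hmem => by linarith [hmem.2],
    if_neg fun hmem => by linarith [hmem.2]]

variable {y : ℝ}

theorem zpow_succ_lt_zpow_mul (hq0 : 0 < q) (hy : q < y) (k : ℤ) : q ^ (k + 1) < q ^ k * y := by
  rw [zpow_add_one₀ hq0.ne']
  exact mul_lt_mul_of_pos_left hy (zpow_pos hq0 k)

theorem zpow_mul_le_zpow (hq0 : 0 < q) (hy : y ≤ 1) (k : ℤ) : q ^ k * y ≤ q ^ k :=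
  mul_le_of_le_one_right (zpow_pos hq0 k).le hy

theorem h_zpow_mul (hq0 : 0 < q) (hq1 : q < 1) (hφq : φ q = 0) (hy : y ∈ Ioc q 1) (k : ℤ) :
    h q φ (q ^ k * y) = (Pi.single 0 (Real.sqrt (φ y * (1 - φ y))) : ℤ → ℝ) k := by
  have hlt := zpow_succ_lt_zpow_mul hq0 hy.1 k
  rcases lt_trichotomy k 0 with hk | rfl | hk
  · rw [Pi.single_eq_of_ne hk.ne]
    exact h_of_one_lt ((one_le_zpow_of_nonpos₀ hq0 hq1.le (by omega)).trans_lt hlt)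
  · simp [h, Ioc_subset_Icc_self hy]
  · rw [Pi.single_eq_of_ne hk.ne']
    refine h_of_le hφq ((zpow_mul_le_zpow hq0 hy.2 k).trans ?_)
    simpa using zpow_le_zpow_right_of_le_one₀ hq0 hq1.le (show 1 ≤ k by omega)

theorem f_zpow_mul (hq0 : 0 < q) (hq1 : q < 1) (hn : 1 ≤ n) (hφq : φ q = 0) (hy : y ∈ Ioc q 1)
    (k : ℤ) : f q n φ (q ^ k * y) = diag (φ y) n k := by
  have hlt := zpow_succ_lt_zpow_mul hq0 hy.1 k
  have hle := zpow_mul_le_zpow hq0 hy.2 k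
  have anti {i j : ℤ} (hij : i ≤ j) : q ^ j ≤ q ^ i :=
    zpow_le_zpow_right_of_le_one₀ hq0 hq1.le hij
  rw [diag]
  split_ifs with h0 hkn hmid
  · subst h0
    simpa using f_of_mem_Ioc hy
  · subst hkn
    rw [f_of_lt_of_le hq0 hq1 hn hlt hle, ← mul_assoc, ← zpow_natCast, ← zpow_add₀ hq0.ne',
      add_neg_cancel, zpow_zero, one_mul]
  · have h1 : 1 < q ^ k * y := (one_le_zpow_of_nonpos₀ hq0 hq1.le (by omega)).trans_lt hlt
    exact f_of_one_lt_of_le hq0 hq1 hφq h1 (hle.trans (anti (by omega)))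
  · rcases (by omega : 0 < k ∨ k < -n) with hk | hk
    · refine f_of_le hq0 hq1 hn hφq (hle.trans ?_)
      simpa using anti (show 1 ≤ k by omega)
    · exact f_of_lt hq0 hq1 hn ((anti (by omega)).trans_lt hlt)

theorem comp_self_eq {s Φ : ℝ} (hs : s * s = Φ * (1 - Φ)) {n : ℤ} (hn : 0 < n)
    (R : ℓ²(ℤ, ℂ) →L[ℂ] ℓ²(ℤ, ℂ))
    (hR : ∀ k, R (lp.single 2 k 1) =
      ((Pi.single 0 s : ℤ → ℝ) k : ℂ) • lp.single 2 (k - n) 1 + (diag Φ n k : ℂ) • lp.single 2 k 1 +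
        ((Pi.single 0 s : ℤ → ℝ) (k + n) : ℂ) • lp.single 2 (k + n) 1) :
    R ∘L R = R := by
  refine lp.ext_single_one ENNReal.ofNat_ne_top fun k => ?_
  rw [ContinuousLinearMap.comp_apply, hR k, map_add, map_add, map_smul, map_smul, map_smul,
    hR (k - n), hR k, hR (k + n), sub_add_cancel, add_sub_cancel_right]
  have hsC : (s : ℂ) * s = Φ * (1 - Φ) := by exact_mod_cast hs
  match_scalars <;> simp only [Pi.single_apply, diag] <;>
    split_ifs <;> push_cast <;> first | (exfalso; omega) | linear_combination hsC | ring

end PowersRieffel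

theorem stmt_7_general (q y : ℝ) (hq0 : 0 < q) (hq1 : q < 1) (hy : y ∈ Set.Ioc q 1)
    (n : ℕ) (hn : 1 ≤ n)
    (φ : ℝ → ℝ)
    (hφ01 : ∀ t ∈ Set.Icc q 1, φ t ∈ Set.Icc (0 : ℝ) 1)
    (hφq : φ q = 0)
    (h f : ℝ → ℝ)
    (hh : ∀ t, h t = if t ∈ Set.Icc q 1 then Real.sqrt (φ t * (1 - φ t)) else 0)
    (hf : ∀ t, f t =
      if t ∈ Set.Icc q 1 then φ t
      else if t ∈ Set.Ioo 1 (q ^ (-(n : ℤ) + 1)) then 1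
      else if t ∈ Set.Icc (q ^ (-(n : ℤ) + 1)) (q ^ (-(n : ℤ))) then
        1 - φ (q ^ n * t)
      else 0)
    (e : ℤ → lp (fun _ : ℤ => ℂ) 2)
    (he : ∀ k : ℤ, e k = lp.single 2 k 1)
    (R : lp (fun _ : ℤ => ℂ) 2 →L[ℂ] lp (fun _ : ℤ => ℂ) 2)
    (hR : ∀ k : ℤ, R (e k) =
      (h (q ^ k * y) : ℂ) • e (k - n) + (f (q ^ k * y) : ℂ) • e k +
        (h (q ^ (k + n) * y) : ℂ) • e (k + n)) :
    IsSelfAdjoint R ∧ R ∘L R = R := by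
  obtain rfl : h = PowersRieffel.h q φ := funext hh
  obtain rfl : f = PowersRieffel.f q n φ := funext hf
  obtain rfl : e = fun k => lp.single 2 k 1 := funext he
  simp only [PowersRieffel.h_zpow_mul hq0 hq1 hφq hy,
    PowersRieffel.f_zpow_mul hq0 hq1 hn hφq hy] at hR
  obtain ⟨hφy0, hφy1⟩ := hφ01 y (Ioc_subset_Icc_self hy)
  have hs : √(φ y * (1 - φ y)) * √(φ y * (1 - φ y)) = φ y * (1 - φ y) :=
    Real.mul_self_sqrt (mul_nonneg hφy0 (sub_nonneg.2 hφy1))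
  exact ⟨isSelfAdjoint_of_apply_single_eq _ _ _ R hR,
    PowersRieffel.comp_self_eq hs (by omega) R hR⟩

theorem stmt_7 (q y : ℝ) (hq0 : 0 < q) (hq1 : q < 1) (hy : y ∈ Set.Ioc q 1)
    (n : ℕ) (hn : 1 ≤ n)
    (φ : ℝ → ℝ) (hφc : ContinuousOn φ (Set.Icc q 1))
    (hφ01 : ∀ t ∈ Set.Icc q 1, φ t ∈ Set.Icc (0 : ℝ) 1)
    (hφq : φ q = 0) (hφ1 : φ 1 = 1)
    (h f : ℝ → ℝ)
    (hh : ∀ t, h t = if t ∈ Set.Icc q 1 then Real.sqrt (φ t * (1 - φ t)) else 0)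
    (hf : ∀ t, f t =
      if t ∈ Set.Icc q 1 then φ t
      else if t ∈ Set.Ioo 1 (q ^ (-(n : ℤ) + 1)) then 1
      else if t ∈ Set.Icc (q ^ (-(n : ℤ) + 1)) (q ^ (-(n : ℤ))) then
        1 - φ (q ^ n * t)
      else 0)
    (e : ℤ → lp (fun _ : ℤ => ℂ) 2)
    (he : ∀ k : ℤ, e k = lp.single 2 k 1)
    (R : lp (fun _ : ℤ => ℂ) 2 →L[ℂ] lp (fun _ : ℤ => ℂ) 2)
    (hR : ∀ k : ℤ, R (e k) =
      (h (q ^ k * y) : ℂ) • e (k - n) + (f (q ^ k * y) : ℂ) • e k +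
        (h (q ^ (k + n) * y) : ℂ) • e (k + n)) :
    IsSelfAdjoint R ∧ R ∘L R = R :=
  stmt_7_general q y hq0 hq1 hy n hn φ hφ01 hφq h f hh hf e he R hR
end

section
/- With notation as in the Powers–Rieffel construction (q ∈ (0,1), y ∈ (q,1], n ≥ 1, φ, h, f_n as above), the operator R on ℓ²(ℤ) defined by R e_k = h(q^k y) e_{k−n} + f_n(q^k y) e_k + h(q^{k+n} y) e_{k+n} is of trace class (indeed of finite rank), and its trace equals n. -/
/-!
The orbit `q ^ k * y` meets each interval `(q ^ (k + 1), q ^ k]` exactly once, so `h (q ^ k * y)`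
vanishes unless `k ∈ {0, 1}` and `f (q ^ k * y)` equals `φ y` at `k = 0`, `1` for `-n < k < 0`,
`1 - φ y` at `k = -n` and `0` elsewhere. Hence `R` maps every `e k` into the span of
`e (-n), …, e 1`, a closed subspace, and by continuity so does all of `R`; the diagonal entries
`⟪e k, R e k⟫ = f (q ^ k * y)` sum to `φ y + (n - 1) + (1 - φ y) = n`.
-/

open Set

theorem lp.range_le_of_single_mem {𝕜 ι F : Type*} [NormedField 𝕜] [DecidableEq ι]
    [NormedAddCommGroup F] [NormedSpace 𝕜 F] {p : ENNReal} [Fact (1 ≤ p)] (hp : p ≠ ⊤)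
    (T : lp (fun _ : ι => 𝕜) p →L[𝕜] F) {V : Submodule 𝕜 F} (hV : IsClosed (V : Set F))
    (hT : ∀ i, T (lp.single p i 1) ∈ V) :
    LinearMap.range (T : lp (fun _ : ι => 𝕜) p →ₗ[𝕜] F) ≤ V := by
  rintro _ ⟨x, rfl⟩
  refine hV.mem_of_tendsto ((lp.hasSum_single hp x).mapL T) (Filter.Eventually.of_forall
    fun s => V.sum_mem fun i _ => ?_)
  have := V.smul_mem (x i) (hT i)
  rwa [← map_smul, ← lp.single_smul, smul_eq_mul, mul_one] at this

theorem Submodule.smul_mem_span_image {R M ι : Type*} [Semiring R] [AddCommMonoid M] [Module R M]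
    {v : ι → M} {S : Set ι} {c : R} {j : ι} (h : c ≠ 0 → j ∈ S) : c • v j ∈ span R (v '' S) := by
  by_cases hc : c = 0
  · simp [hc]
  · exact smul_mem _ _ (subset_span (mem_image_of_mem v (h hc)))

theorem lp.inner_single_smul_add_smul_add_smul {𝕜 ι : Type*} [RCLike 𝕜] [DecidableEq ι]
    {i j l : ι} (hj : i ≠ j) (hl : i ≠ l) (a b c : 𝕜) :
    inner 𝕜 (lp.single 2 i (1 : 𝕜))
      (a • lp.single 2 j 1 + b • lp.single 2 i 1 + c • lp.single 2 l 1 : lp (fun _ : ι => 𝕜) 2)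
      = b := by
  simp [inner_add_right, inner_smul_right, lp.inner_single_left, Pi.single_eq_of_ne hj,
    Pi.single_eq_of_ne hl]

section PowersRieffel

variable {q y : ℝ}

theorem zpow_mul_le_zpow_iff (hq0 : 0 < q) (hq1 : q < 1) (hqy : q < y) (hy1 : y ≤ 1)
    {k m : ℤ} : q ^ k * y ≤ q ^ m ↔ m ≤ k := by
  have hanti {a b : ℤ} : a ≤ b → q ^ b ≤ q ^ a := (zpow_le_zpow_iff_right_of_lt_one₀ hq0 hq1).2
  refine ⟨fun h => ?_, fun h => (mul_le_of_le_one_right (zpow_pos hq0 k).le hy1).trans (hanti h)⟩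
  by_contra! hkm
  have : q ^ (k + 1) < q ^ k * y := by
    rw [zpow_add_one₀ hq0.ne']
    exact mul_lt_mul_of_pos_left hqy (zpow_pos hq0 k)
  exact (hanti (show k + 1 ≤ m by omega)).not_gt (this.trans_le h)

theorem zpow_lt_zpow_mul_iff (hq0 : 0 < q) (hq1 : q < 1) (hqy : q < y) (hy1 : y ≤ 1)
    {k m : ℤ} : q ^ m < q ^ k * y ↔ k < m := by
  rw [← not_le, zpow_mul_le_zpow_iff hq0 hq1 hqy hy1, not_le]

theorem zpow_le_zpow_mul_iff (hq0 : 0 < q) (hq1 : q < 1) (hqy : q < y) (hy1 : y < 1)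
    {k m : ℤ} : q ^ m ≤ q ^ k * y ↔ k < m := by
  refine ⟨fun h => ?_, fun h => ((zpow_lt_zpow_mul_iff hq0 hq1 hqy hy1.le).2 h).le⟩
  by_contra! hmk
  have : q ^ k * y < q ^ k := mul_lt_of_lt_one_right (zpow_pos hq0 k) hy1
  exact this.not_ge (((zpow_le_zpow_iff_right_of_lt_one₀ hq0 hq1).2 hmk).trans h)

theorem zpow_mul_lt_zpow_iff (hq0 : 0 < q) (hq1 : q < 1) (hqy : q < y) (hy1 : y < 1)
    {k m : ℤ} : q ^ k * y < q ^ m ↔ m ≤ k := by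
  rw [← not_le, zpow_le_zpow_mul_iff hq0 hq1 hqy hy1, not_lt]

noncomputable def powersRieffelH (q : ℝ) (φ : ℝ → ℝ) (t : ℝ) : ℝ :=
  if t ∈ Set.Icc q 1 then Real.sqrt (φ t * (1 - φ t)) else 0

noncomputable def powersRieffelF (q : ℝ) (n : ℕ) (φ : ℝ → ℝ) (t : ℝ) : ℝ :=
  if t ∈ Set.Icc q 1 then φ t
  else if t ∈ Set.Ioo 1 (q ^ (-(n : ℤ) + 1)) then 1
  else if t ∈ Set.Icc (q ^ (-(n : ℤ) + 1)) (q ^ (-(n : ℤ))) then 1 - φ (q ^ n * t)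
  else 0

variable {n : ℕ} {φ : ℝ → ℝ}

theorem powersRieffelH_zpow_mul_ne_zero (hq0 : 0 < q) (hq1 : q < 1) (hqy : q < y) (hy1 : y ≤ 1)
    {k : ℤ} (hk : powersRieffelH q φ (q ^ k * y) ≠ 0) : 0 ≤ k ∧ k ≤ 1 := by
  obtain ⟨hq, h1⟩ : q ^ k * y ∈ Icc q 1 := by
    by_contra hmem
    exact hk (if_neg hmem)
  have hqk : q ^ (1 : ℤ) ≤ q ^ k := by
    simpa using hq.trans (mul_le_of_le_one_right (zpow_pos hq0 k).le hy1)
  refine ⟨?_, (zpow_le_zpow_iff_right_of_lt_one₀ hq0 hq1).1 hqk⟩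
  exact (zpow_mul_le_zpow_iff hq0 hq1 hqy hy1 (m := 0)).1 (by simpa using h1)

theorem powersRieffelF_zpow_mul (hq0 : 0 < q) (hq1 : q < 1) (hqy : q < y) (hy1 : y ≤ 1)
    (hφq : φ q = 0) (k : ℤ) :
    powersRieffelF q n φ (q ^ k * y) =
      if k = 0 then φ y else if k = -n then 1 - φ y else if -n < k ∧ k < 0 then 1 else 0 := by
  have hshift : q ^ n * (q ^ k * y) = q ^ (n + k) * y := by
    rw [← mul_assoc, ← zpow_natCast, ← zpow_add₀ hq0.ne']
  rcases hy1.lt_or_eq with hy1 | rfl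
  · have h0 : q ^ k * y ≤ 1 ↔ 0 ≤ k := by
      simpa using zpow_mul_le_zpow_iff hq0 hq1 hqy hy1.le (m := 0)
    have h0' : 1 < q ^ k * y ↔ k < 0 := by
      simpa using zpow_lt_zpow_mul_iff hq0 hq1 hqy hy1.le (m := 0)
    have h1 : q ≤ q ^ k * y ↔ k < 1 := by
      simpa using zpow_le_zpow_mul_iff hq0 hq1 hqy hy1 (m := 1)
    simp only [powersRieffelF, mem_Icc, mem_Ioo, h0, h0', h1, hshift,
      zpow_mul_le_zpow_iff hq0 hq1 hqy hy1.le, zpow_le_zpow_mul_iff hq0 hq1 hqy hy1,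
      zpow_mul_lt_zpow_iff hq0 hq1 hqy hy1]
    split_ifs <;> first
      | omega
      | rfl
      | (obtain rfl : k = 0; omega; simp)
      | (obtain rfl : k = -n; omega; simp)
  -- For `y = 1` the orbit hits interval endpoints, where `φ q = 0` reconciles the overlapping cases.
  · have h1 : q ≤ q ^ k ↔ k ≤ 1 := by
      simpa using zpow_le_zpow_iff_right_of_lt_one₀ hq0 hq1 (m := 1) (n := k)
    rw [mul_one] at hshift
    simp only [powersRieffelF, mem_Icc, mem_Ioo, mul_one, h1, hshift,
      zpow_le_zpow_iff_right_of_lt_one₀ hq0 hq1, zpow_lt_zpow_iff_right_of_lt_one₀ hq0 hq1,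
      one_lt_zpow_iff_right_of_lt_one₀ hq0 hq1, zpow_le_one_iff_right_of_lt_one₀ hq0 hq1]
    split_ifs <;> first
      | omega
      | rfl
      | (obtain rfl : k = 0; omega; simp)
      | (obtain rfl : k = 1; omega; simpa using hφq)
      | (obtain rfl : k = -n; omega; simp)
      | (obtain rfl : k = -n + 1; omega; simpa using hφq)

theorem powersRieffelF_zpow_mul_ne_zero (hq0 : 0 < q) (hq1 : q < 1) (hqy : q < y) (hy1 : y ≤ 1)
    (hφq : φ q = 0) {k : ℤ} (hk : powersRieffelF q n φ (q ^ k * y) ≠ 0) : -n ≤ k ∧ k ≤ 0 := by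
  rw [powersRieffelF_zpow_mul hq0 hq1 hqy hy1 hφq] at hk
  split_ifs at hk <;> first | omega | exact (hk rfl).elim

theorem hasSum_powersRieffelF (hq0 : 0 < q) (hq1 : q < 1) (hqy : q < y) (hy1 : y ≤ 1)
    (hn : 1 ≤ n) (hφq : φ q = 0) :
    HasSum (fun k : ℤ => powersRieffelF q n φ (q ^ k * y)) n := by
  have hsplit : (fun k : ℤ => powersRieffelF q n φ (q ^ k * y)) = fun k : ℤ =>
      ((if k = 0 then φ y else 0) + (if k = -n then 1 - φ y else 0)) +
        (if k ∈ Finset.Ioo (-n : ℤ) 0 then 1 else 0) := by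
    ext k
    rw [powersRieffelF_zpow_mul hq0 hq1 hqy hy1 hφq]
    simp only [Finset.mem_Ioo]
    split_ifs <;> first | omega | ring
  have hIoo : HasSum (fun k : ℤ => if k ∈ Finset.Ioo (-n : ℤ) 0 then (1 : ℝ) else 0) (n - 1) := by
    convert hasSum_sum_of_ne_finset_zero (L := SummationFilter.unconditional ℤ)
      (s := Finset.Ioo (-n : ℤ) 0) fun k hk => if_neg hk using 1
    rw [Finset.sum_ite_of_true fun _ hk => hk, Finset.sum_const, Int.card_Ioo, nsmul_one,
      show (0 - -(n : ℤ) - 1).toNat = n - 1 by omega, Nat.cast_sub hn, Nat.cast_one]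
  rw [hsplit]
  convert ((hasSum_ite_eq 0 (φ y)).add (hasSum_ite_eq (-n : ℤ) (1 - φ y))).add hIoo using 1
  ring

end PowersRieffel

theorem stmt_8_general (q y : ℝ) (hq0 : 0 < q) (hq1 : q < 1) (hy : y ∈ Set.Ioc q 1)
    (n : ℕ) (hn : 1 ≤ n)
    (φ : ℝ → ℝ)
    (hφq : φ q = 0)
    (h f : ℝ → ℝ)
    (hh : ∀ t, h t = if t ∈ Set.Icc q 1 then Real.sqrt (φ t * (1 - φ t)) else 0)
    (hf : ∀ t, f t =
      if t ∈ Set.Icc q 1 then φ t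
      else if t ∈ Set.Ioo 1 (q ^ (-(n : ℤ) + 1)) then 1
      else if t ∈ Set.Icc (q ^ (-(n : ℤ) + 1)) (q ^ (-(n : ℤ))) then
        1 - φ (q ^ n * t)
      else 0)
    (e : ℤ → lp (fun _ : ℤ => ℂ) 2)
    (he : ∀ k : ℤ, e k = lp.single 2 k 1)
    (R : lp (fun _ : ℤ => ℂ) 2 →L[ℂ] lp (fun _ : ℤ => ℂ) 2)
    (hR : ∀ k : ℤ, R (e k) =
      (h (q ^ k * y) : ℂ) • e (k - n) + (f (q ^ k * y) : ℂ) • e k +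
        (h (q ^ (k + n) * y) : ℂ) • e (k + n)) :
    FiniteDimensional ℂ (LinearMap.range (R : lp (fun _ : ℤ => ℂ) 2 →ₗ[ℂ] lp (fun _ : ℤ => ℂ) 2)) ∧
      HasSum (fun k : ℤ => (inner ℂ (e k) (R (e k)) : ℂ)) (n : ℂ) := by
  obtain ⟨hqy, hy1⟩ := hy
  obtain rfl : h = powersRieffelH q φ := funext hh
  obtain rfl : f = powersRieffelF q n φ := funext hf
  constructor
  · let V : Submodule ℂ (lp (fun _ : ℤ => ℂ) 2) := Submodule.span ℂ (e '' Icc (-n : ℤ) 1)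
    have : FiniteDimensional ℂ V := .span_of_finite ℂ ((finite_Icc _ _).image e)
    have hRV (k : ℤ) : R (e k) ∈ V := by
      rw [hR k]
      refine V.add_mem (V.add_mem ?_ ?_) ?_ <;> refine Submodule.smul_mem_span_image fun hc => ?_
      · have := powersRieffelH_zpow_mul_ne_zero hq0 hq1 hqy hy1 (k := k) (by exact_mod_cast hc)
        exact ⟨by omega, by omega⟩
      · have := powersRieffelF_zpow_mul_ne_zero hq0 hq1 hqy hy1 hφq (by exact_mod_cast hc)
        exact ⟨by omega, by omega⟩
      · have := powersRieffelH_zpow_mul_ne_zero hq0 hq1 hqy hy1 (k := k + n)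
          (by exact_mod_cast hc)
        exact ⟨by omega, by omega⟩
    exact Submodule.finiteDimensional_of_le (lp.range_le_of_single_mem (by norm_num) R
      V.closed_of_finiteDimensional fun k => he k ▸ hRV k)
  · have hdiag (k : ℤ) : inner ℂ (e k) (R (e k)) = (powersRieffelF q n φ (q ^ k * y) : ℂ) := by
      rw [hR k]
      simp only [he]
      exact lp.inner_single_smul_add_smul_add_smul (by omega) (by omega) _ _ _
    simp only [hdiag]
    rw [← Complex.ofReal_natCast]
    exact Complex.hasSum_ofReal.mpr (hasSum_powersRieffelF hq0 hq1 hqy hy1 hn hφq)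

theorem stmt_8 (q y : ℝ) (hq0 : 0 < q) (hq1 : q < 1) (hy : y ∈ Set.Ioc q 1)
    (n : ℕ) (hn : 1 ≤ n)
    (φ : ℝ → ℝ) (hφc : ContinuousOn φ (Set.Icc q 1))
    (hφ01 : ∀ t ∈ Set.Icc q 1, φ t ∈ Set.Icc (0 : ℝ) 1)
    (hφq : φ q = 0) (hφ1 : φ 1 = 1)
    (h f : ℝ → ℝ)
    (hh : ∀ t, h t = if t ∈ Set.Icc q 1 then Real.sqrt (φ t * (1 - φ t)) else 0)
    (hf : ∀ t, f t =
      if t ∈ Set.Icc q 1 then φ t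
      else if t ∈ Set.Ioo 1 (q ^ (-(n : ℤ) + 1)) then 1
      else if t ∈ Set.Icc (q ^ (-(n : ℤ) + 1)) (q ^ (-(n : ℤ))) then
        1 - φ (q ^ n * t)
      else 0)
    (e : ℤ → lp (fun _ : ℤ => ℂ) 2)
    (he : ∀ k : ℤ, e k = lp.single 2 k 1)
    (R : lp (fun _ : ℤ => ℂ) 2 →L[ℂ] lp (fun _ : ℤ => ℂ) 2)
    (hR : ∀ k : ℤ, R (e k) =
      (h (q ^ k * y) : ℂ) • e (k - n) + (f (q ^ k * y) : ℂ) • e k +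
        (h (q ^ (k + n) * y) : ℂ) • e (k + n)) :
    FiniteDimensional ℂ (LinearMap.range (R : lp (fun _ : ℤ => ℂ) 2 →ₗ[ℂ] lp (fun _ : ℤ => ℂ) 2)) ∧
      HasSum (fun k : ℤ => (inner ℂ (e k) (R (e k)) : ℂ)) (n : ℂ) :=
  stmt_8_general q y hq0 hq1 hy n hn φ hφq h f hh hf e he R hR
end
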